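/- arXiv:1505.00352 — 2 statements merged into one kernel-verified Lean document; each statement's English description precedes it below -/
import Mathlib

section
/- For every integer n ≥ 1 and every integer k with 0 ≤ k ≤ n-1, the polynomial (1+x)^{n-k} divides the polynomial p_k(x) := ∑_{N=0}^{n} N^k · C(n,N) · x^N in ℤ[x]. -/
/-!
Write `θ = X · d/dX`, so that `p_k = θ^k (1 + X)^n`. Differentiating a multiple of `(1 + X)^m`
leaves a multiple of `(1 + X)^(m - 1)`, so each application of `θ` costs at most one factor of
`1 + X`, and `(1 + X)^(n - k)` divides `θ^k (1 + X)^n`.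
-/

open Polynomial

namespace Polynomial

variable {R : Type*} [CommSemiring R]

theorem pow_sub_dvd_iterate_X_mul_derivative_of_pow_dvd {p q : R[X]} {m : ℕ} (k : ℕ)
    (dvd : q ^ m ∣ p) : q ^ (m - k) ∣ (fun f ↦ X * derivative f)^[k] p := by
  induction k with
  | zero => simpa
  | succ k ih =>
    rw [Nat.sub_succ, Function.iterate_succ_apply']
    exact (pow_sub_one_dvd_derivative_of_pow_dvd ih).mul_left X

theorem X_mul_derivative_sum_C_mul_X_pow (s : Finset ℕ) (a : ℕ → R) :
    X * derivative (∑ N ∈ s, C (a N) * X ^ N) = ∑ N ∈ s, C ((N : R) * a N) * X ^ N := by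
  rw [derivative_sum, Finset.mul_sum]
  refine Finset.sum_congr rfl fun N _ ↦ ?_
  rw [derivative_C_mul_X_pow]
  cases N with
  | zero => simp
  | succ N => rw [Nat.add_sub_cancel, mul_comm (a _)]; ring

theorem sum_range_pow_mul_choose_eq_iterate_X_mul_derivative (n k : ℕ) :
    ∑ N ∈ Finset.range (n + 1), C ((N : R) ^ k * n.choose N) * X ^ N =
      (fun f ↦ X * derivative f)^[k] ((1 + X) ^ n) := by
  induction k with
  | zero =>
    rw [Function.iterate_zero_apply, add_comm (1 : R[X]), add_pow]
    simp [mul_comm]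
  | succ k ih =>
    rw [Function.iterate_succ_apply', ← ih, X_mul_derivative_sum_C_mul_X_pow]
    simp only [pow_succ, mul_assoc, mul_left_comm]

end Polynomial

theorem stmt_1_general (n k : ℕ) :
    ((1 + X : ℤ[X]) ^ (n - k)) ∣
      ∑ N ∈ Finset.range (n + 1), C ((N : ℤ) ^ k * (n.choose N : ℤ)) * X ^ N := by
  rw [sum_range_pow_mul_choose_eq_iterate_X_mul_derivative]
  exact pow_sub_dvd_iterate_X_mul_derivative_of_pow_dvd k dvd_rfl

theorem stmt_1 (n k : ℕ) (hn : 1 ≤ n) (hk : k ≤ n - 1) :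
    ((1 + X : ℤ[X]) ^ (n - k)) ∣
      ∑ N ∈ Finset.range (n + 1), C ((N : ℤ) ^ k * (n.choose N : ℤ)) * X ^ N :=
  stmt_1_general n k
end

section
/- Let v_1, ..., v_k ∈ ℤ^n be linearly independent, and suppose there is a coordinate j such that v_1 has j-th coordinate ±1 and v_2, ..., v_k all have j-th coordinate 0. Then the number of lattice points in the half-open parallelepiped spanned by v_1, ..., v_k equals the number of lattice points in the half-open parallelepiped spanned by v_2, ..., v_k. -/
/-- The number of lattice points in the half-open parallelepiped
`{∑ t_i v_i : t_i ∈ [0,1)}` spanned by the integer vectors `v 0, …, v (k-1)`. -/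
noncomputable def latticeCount (n k : ℕ) (v : Fin k → Fin n → ℤ) : ℕ :=
  Nat.card {x : Fin n → ℤ //
    ∃ t : Fin k → ℝ, (∀ i, 0 ≤ t i ∧ t i < 1) ∧ ∀ j, (x j : ℝ) = ∑ i, t i * (v i j : ℝ)}

def InHalfOpenParallelepiped {n k : ℕ} (v : Fin k → Fin n → ℤ) (x : Fin n → ℤ) : Prop :=
  ∃ t : Fin k → ℝ, (∀ i, 0 ≤ t i ∧ t i < 1) ∧ ∀ j, (x j : ℝ) = ∑ i, t i * (v i j : ℝ)

lemma eq_zero_of_intCast_eq_mul_unit {t : ℝ} {a m : ℤ} (ha : IsUnit a) (h : (m : ℝ) = t * a)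
    (ht : t ∈ Set.Ico 0 1) : t = 0 := by
  have ht_int : t = ((m * a : ℤ) : ℝ) := by
    have haa : ((a * a : ℤ) : ℝ) = 1 := by rw [Int.isUnit_mul_self ha, Int.cast_one]
    push_cast at haa ⊢
    rw [h, mul_assoc, haa, mul_one]
  rw [ht_int, ← Int.floor_eq_zero_iff, Int.floor_intCast] at ht
  rw [ht_int, ht, Int.cast_zero]

/-- The `j`-th coordinate forces the coefficient of `v 0` to be an integer in `[0, 1)`, hence `0`. -/
lemma inHalfOpenParallelepiped_succ_iff {n k : ℕ} {v : Fin (k + 1) → Fin n → ℤ} {j : Fin n}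
    (hunit : IsUnit (v 0 j)) (h0 : ∀ i : Fin k, v i.succ j = 0) (x : Fin n → ℤ) :
    InHalfOpenParallelepiped v x ↔ InHalfOpenParallelepiped (fun i => v i.succ) x := by
  constructor
  · rintro ⟨t, ht, hx⟩
    have hxj : (x j : ℝ) = t 0 * v 0 j := by
      simpa [Fin.sum_univ_succ, h0] using hx j
    have ht0 : t 0 = 0 := eq_zero_of_intCast_eq_mul_unit hunit hxj (ht 0)
    refine ⟨fun i => t i.succ, fun i => ht i.succ, fun j' => ?_⟩
    simpa [Fin.sum_univ_succ, ht0] using hx j'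
  · rintro ⟨t, ht, hx⟩
    refine ⟨Fin.cons 0 t, Fin.cases (by simp) (by simpa using ht), fun j' => ?_⟩
    simpa [Fin.sum_univ_succ] using hx j'

theorem stmt_17_general (n k : ℕ) (v : Fin (k + 1) → Fin n → ℤ)
    (j : Fin n) (h1 : v 0 j = 1 ∨ v 0 j = -1)
    (h0 : ∀ i : Fin k, v i.succ j = 0) :
    latticeCount n (k + 1) v = latticeCount n k (fun i => v i.succ) :=
  Nat.card_congr <| Equiv.subtypeEquivRight <|
    inHalfOpenParallelepiped_succ_iff (Int.isUnit_iff.mpr h1) h0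

theorem stmt_17 (n k : ℕ) (v : Fin (k + 1) → Fin n → ℤ)
    (hv : LinearIndependent ℚ fun i => fun j => ((v i j : ℚ)))
    (j : Fin n) (h1 : v 0 j = 1 ∨ v 0 j = -1)
    (h0 : ∀ i : Fin k, v i.succ j = 0) :
    latticeCount n (k + 1) v = latticeCount n k (fun i => v i.succ) :=
  stmt_17_general n k v j h1 h0
end
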